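/- arXiv:2510.27362 — 3 statements merged into one kernel-verified Lean document; each statement's English description precedes it below -/
import Mathlib

section
/- On a complex Hermitian manifold (X, ω) of dimension n with a Hermitian metric ρ, for every (p,q)-form u with ∂̄*_ρ u = 0, one has Λ_ρ(i∂∂̄ u) = i∂∂̄ Λ_ρ u − Δ''_ρ u + ∂∂*_ρ u + ∂τ*_ρ u − τ̄*_ρ ∂̄ u, where τ_ρ = [Λ_ρ, ∂ρ ∧ ·] is the torsion operator and Δ''_ρ = ∂̄∂̄*_ρ + ∂̄*_ρ∂̄. -/
theorem Module.End.apply_apply_eq_of_commutator_eq {R M : Type*} [Semiring R] [AddCommGroup M]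
    [Module R M] {A B C : Module.End R M} (h : A * B - B * A = C) (x : M) :
    A (B x) = B (A x) + C x := by
  rw [← h]
  simp

/-- The Hermitian version of Lemma 3.1, stated abstractly: on the space of smooth
forms of a Hermitian manifold `(X, ρ)` let `pd = ∂`, `pdb = ∂̄`, `pds = ∂*_ρ`,
`pdbs = ∂̄*_ρ`, `taus = τ*_ρ`, `taubs = τ̄*_ρ` and `Lam = Λ_ρ`.  Demailly's
Hermitian commutation relations read `[Λ_ρ, ∂̄] = −i(∂*_ρ + τ*_ρ)` and
`[Λ_ρ, ∂] = i(∂̄*_ρ + τ̄*_ρ)`.  Then for every form `u` with `∂̄*_ρ u = 0`: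
`Λ_ρ(i∂∂̄u) = i∂∂̄Λ_ρ u − Δ''_ρ u + ∂∂*_ρ u + ∂τ*_ρ u − τ̄*_ρ ∂̄ u`,
where `Δ''_ρ u = (∂̄∂̄*_ρ + ∂̄*_ρ∂̄) u`. -/
theorem stmt_5 {M : Type*} [AddCommGroup M] [Module ℂ M]
    (Lam pd pdb pds pdbs taus taubs : Module.End ℂ M)
    (hcomm1 : Lam * pdb - pdb * Lam = (-Complex.I) • (pds + taus))
    (hcomm2 : Lam * pd - pd * Lam = Complex.I • (pdbs + taubs))
    (u : M) (hu : pdbs u = 0) :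
    Lam (Complex.I • pd (pdb u)) =
      Complex.I • pd (pdb (Lam u)) - (pdb (pdbs u) + pdbs (pdb u))
        + pd (pds u) + pd (taus u) - taubs (pdb u) := by
  have hLam_pd := Module.End.apply_apply_eq_of_commutator_eq hcomm2 (pdb u)
  have hLam_pdb := Module.End.apply_apply_eq_of_commutator_eq hcomm1 u
  rw [map_smul, hLam_pd, hLam_pdb, hu, map_zero]
  simp only [LinearMap.smul_apply, LinearMap.add_apply, map_add, map_smul, neg_smul,
    LinearMap.neg_apply, map_neg, smul_add, smul_neg, smul_smul, Complex.I_mul_I, one_smul]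
  module
end

section
/- Let (X, ω) be a complex Hermitian manifold of dimension n, let r satisfy 1 ≤ r and 2r ≤ n, and let ζ be a smooth (r,r)-form. Writing (Λ_ω^{r-1}ζ)_prim for the primitive component of the (1,1)-form Λ_ω^{r-1}ζ in its Lefschetz decomposition Λ_ω^{r-1}ζ = (Λ_ω^{r-1}ζ)_prim + (1/n)(Λ_ω^r ζ)·ω, one has ζ_prim^{(r-1)} = ((n-r-1)!/((n-2)!·(r-1)!)) · (Λ_ω^{r-1}ζ)_prim. -/
/-!
On a primitive vector `v` of degree `k` the commutation relation reduces to
`Λ (L^(t+1) v) = (t+1)(n-t-k) · L^t v`. Hence `Λ^(r-1)` kills every term `L^l p_l` with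
`l < r-1` of the Lefschetz decomposition of `ζ`, and sends the last two terms to
`B · p_{r-1} + A · L p_r`, while `Λ^r ζ = n A · p_r`. Comparing with the decomposition
`Λ^(r-1) ζ = q + (1/n) L (Λ^r ζ)` gives `q = B · p_{r-1}`, where
`B = ∏_{j<r-1} (j+1)(n-2-j) = (r-1)! (n-2)! / (n-r-1)!`.
-/

open Finset

section Lefschetz

variable {R M : Type*} [CommRing R] [AddCommGroup M] [Module R M]

def LefschetzCommutation (n : ℕ) (Deg : ℤ → Submodule R M) (L Lam : Module.End R M) : Prop :=
  ∀ (s : ℕ) (k : ℤ), ∀ v ∈ Deg k,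
    (L ^ s) (Lam v) - Lam ((L ^ s) v)
      = ((s : R) * ((k : R) - (n : R) + (s : R) - 1)) • (L ^ (s - 1)) v

/-- The scalar by which `Λ^m` maps `L^(l+m) v` to `L^l v` for `v` primitive of degree `k`. -/
def lefschetzCoeff (R : Type*) [CommRing R] (n : ℕ) (k : ℤ) (l m : ℕ) : R :=
  ∏ j ∈ range m, ((l + j + 1 : ℕ) : R) * ((n : R) - (l + j : ℕ) - k)

variable {n : ℕ} {Deg : ℤ → Submodule R M} {L Lam : Module.End R M}

theorem lam_lPow_succ_of_primitive (hcomm : LefschetzCommutation n Deg L Lam) {k : ℤ} {v : M}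
    (hv : v ∈ Deg k) (hprim : Lam v = 0) (t : ℕ) :
    Lam ((L ^ (t + 1)) v) = (((t + 1 : ℕ) : R) * ((n : R) - t - k)) • (L ^ t) v := by
  have h := hcomm (t + 1) k v hv
  rw [hprim, map_zero, zero_sub, neg_eq_iff_eq_neg, Nat.add_sub_cancel] at h
  rw [h, ← neg_smul]
  congr 1
  push_cast
  ring

theorem lamPow_lPow_add_of_primitive (hcomm : LefschetzCommutation n Deg L Lam) {k : ℤ}
    {v : M} (hv : v ∈ Deg k) (hprim : Lam v = 0) (l m : ℕ) :
    (Lam ^ m) ((L ^ (l + m)) v) = lefschetzCoeff R n k l m • (L ^ l) v := by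
  induction m with
  | zero => simp [lefschetzCoeff]
  | succ m ih =>
    rw [← add_assoc, pow_succ, Module.End.mul_apply,
      lam_lPow_succ_of_primitive hcomm hv hprim, map_smul, ih, smul_smul]
    unfold lefschetzCoeff
    rw [prod_range_succ, mul_comm]

theorem lamPow_lPow_eq_zero_of_lt (hcomm : LefschetzCommutation n Deg L Lam) {k : ℤ}
    {v : M} (hv : v ∈ Deg k) (hprim : Lam v = 0) {l m : ℕ} (hlm : l < m) :
    (Lam ^ m) ((L ^ l) v) = 0 := by
  obtain ⟨d, rfl⟩ := Nat.exists_eq_add_of_lt hlm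
  have hl := lamPow_lPow_add_of_primitive hcomm hv hprim 0 l
  rw [zero_add, pow_zero, Module.End.one_apply] at hl
  rw [show l + d + 1 = d + 1 + l by omega, pow_add, Module.End.mul_apply, hl, map_smul,
    pow_succ, Module.End.mul_apply, hprim, map_zero, smul_zero]

theorem lamPow_sum_lPow_eq_sum_Ico (hcomm : LefschetzCommutation n Deg L Lam)
    {p : ℕ → M} {deg : ℕ → ℤ} (hdeg : ∀ l, p l ∈ Deg (deg l)) (hprim : ∀ l, Lam (p l) = 0)
    {m N : ℕ} (hmN : m ≤ N) :
    (Lam ^ m) (∑ l ∈ range N, (L ^ l) (p l)) = ∑ l ∈ Ico m N, (Lam ^ m) ((L ^ l) (p l)) := by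
  rw [map_sum, ← sum_range_add_sum_Ico _ hmN, sum_eq_zero, zero_add]
  intro l hl
  exact lamPow_lPow_eq_zero_of_lt hcomm (hdeg l) (hprim l) (mem_range.mp hl)

theorem lamPow_sum_lPow_succ (hcomm : LefschetzCommutation n Deg L Lam)
    {p : ℕ → M} {deg : ℕ → ℤ} (hdeg : ∀ l, p l ∈ Deg (deg l)) (hprim : ∀ l, Lam (p l) = 0)
    (m : ℕ) :
    (Lam ^ m) (∑ l ∈ range (m + 1), (L ^ l) (p l)) = lefschetzCoeff R n (deg m) 0 m • p m := by
  have h := lamPow_lPow_add_of_primitive hcomm (hdeg m) (hprim m) 0 m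
  rw [zero_add, pow_zero, Module.End.one_apply] at h
  rw [lamPow_sum_lPow_eq_sum_Ico hcomm hdeg hprim (Nat.le_succ m), sum_Ico_succ_top le_rfl,
    Ico_self, sum_empty, zero_add, h]

theorem lamPow_sum_lPow_succ_succ (hcomm : LefschetzCommutation n Deg L Lam)
    {p : ℕ → M} {deg : ℕ → ℤ} (hdeg : ∀ l, p l ∈ Deg (deg l)) (hprim : ∀ l, Lam (p l) = 0)
    (m : ℕ) :
    (Lam ^ m) (∑ l ∈ range (m + 1 + 1), (L ^ l) (p l))
      = lefschetzCoeff R n (deg m) 0 m • p m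
        + lefschetzCoeff R n (deg (m + 1)) 1 m • L (p (m + 1)) := by
  have h := lamPow_lPow_add_of_primitive hcomm (hdeg (m + 1)) (hprim (m + 1)) 1 m
  rw [add_comm 1 m, pow_one] at h
  rw [map_sum, sum_range_succ, ← map_sum, lamPow_sum_lPow_succ hcomm hdeg hprim, h]

end Lefschetz

theorem lefschetzCoeff_succ (R : Type*) [CommRing R] (n : ℕ) (k : ℤ) (l m : ℕ) :
    lefschetzCoeff R n k l (m + 1)
      = (((l + 1 : ℕ) : R) * ((n : R) - l - k)) * lefschetzCoeff R n k (l + 1) m := by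
  unfold lefschetzCoeff
  rw [prod_range_succ', mul_comm]
  congr 1
  refine prod_congr rfl fun j _ => ?_
  push_cast
  ring

theorem factorial_div_mul_lefschetzCoeff_two_zero (K : Type*) [Field K] [CharZero K]
    {n s : ℕ} (hsn : s + 2 ≤ n) :
    ((n - 2 - s).factorial : K) / ((n - 2).factorial * s.factorial)
      * lefschetzCoeff K n 2 0 s = 1 := by
  have hprod : ∏ j ∈ range s, (j + 1) * (n - 2 - j) = s.factorial * (n - 2).descFactorial s := by
    rw [prod_mul_distrib, prod_range_add_one_eq_factorial, Nat.descFactorial_eq_prod_range]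
  have hcoeff : lefschetzCoeff K n 2 0 s = ((s.factorial * (n - 2).descFactorial s : ℕ) : K) := by
    rw [← hprod, Nat.cast_prod, lefschetzCoeff]
    refine prod_congr rfl fun j hj => ?_
    have hjn : j + 2 ≤ n := by have := mem_range.mp hj; omega
    rw [Nat.cast_mul, Nat.cast_sub (by omega), Nat.cast_sub (by omega)]
    push_cast
    ring
  have hfact : (n - 2 - s).factorial * (s.factorial * (n - 2).descFactorial s)
      = (n - 2).factorial * s.factorial := by
    rw [mul_left_comm, Nat.factorial_mul_descFactorial (by omega), mul_comm]
  rw [hcoeff, div_mul_eq_mul_div, div_eq_one_iff_eq (by norm_cast; positivity)]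
  exact_mod_cast hfact

theorem stmt_11_general {M : Type*} [AddCommGroup M] [Module ℂ M]
    (n r : ℕ) (hr : 1 ≤ r) (hrn : 2 * r ≤ n)
    (Deg : ℤ → Submodule ℂ M)
    (L Lam : Module.End ℂ M)
    (hcomm : ∀ (s : ℕ) (k : ℤ), ∀ v ∈ Deg k,
      (L ^ s) (Lam v) - Lam ((L ^ s) v)
        = ((s : ℂ) * ((k : ℂ) - (n : ℂ) + (s : ℂ) - 1)) • (L ^ (s - 1)) v)
    (ζ : M) (p : ℕ → M)
    (hprim : ∀ l, Lam (p l) = 0)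
    (hdeg : ∀ l : ℕ, p l ∈ Deg (2 * ((r : ℤ) - (l : ℤ))))
    (hdec : ζ = ∑ l ∈ Finset.range (r + 1), (L ^ l) (p l))
    (q : M)
    (hdecq : (Lam ^ (r - 1)) ζ = q + ((n : ℂ))⁻¹ • L ((Lam ^ r) ζ)) :
    p (r - 1) = ((Nat.factorial (n - r - 1) : ℂ) /
        ((Nat.factorial (n - 2) : ℂ) * (Nat.factorial (r - 1) : ℂ))) • q := by
  obtain ⟨s, rfl⟩ : ∃ s, r = s + 1 := ⟨r - 1, by omega⟩
  simp only [Nat.add_sub_cancel] at hdecq ⊢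
  have hcomm' : LefschetzCommutation n Deg L Lam := hcomm
  have hΛs := lamPow_sum_lPow_succ_succ hcomm' hdeg hprim s
  have hΛr := lamPow_sum_lPow_succ hcomm' hdeg hprim (s + 1)
  have hdeg_s : 2 * (((s + 1 : ℕ) : ℤ) - (s : ℤ)) = 2 := by push_cast; ring
  rw [← hdec, hdeg_s, sub_self, mul_zero] at hΛs
  rw [← hdec, sub_self, mul_zero, lefschetzCoeff_succ] at hΛr
  simp only [zero_add, Nat.cast_one, one_mul, Nat.cast_zero, Int.cast_zero, sub_zero] at hΛr
  have hn : (n : ℂ) ≠ 0 := Nat.cast_ne_zero.mpr (by omega)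
  rw [hΛs, hΛr, map_smul, smul_smul, inv_mul_cancel_left₀ hn] at hdecq
  rw [← add_right_cancel hdecq, smul_smul, show n - (s + 1) - 1 = n - 2 - s by omega,
    factorial_div_mul_lefschetzCoeff_two_zero ℂ (by omega), one_smul]

/-- Corollary 3.3, stated abstractly (same Lefschetz setting as Lemma 3.2): if
`ζ` is an `(r,r)`-form (`1 ≤ r`, `2r ≤ n`) with Lefschetz decomposition
`ζ = ∑_{l=0}^r L^l(ζ_prim^{(l)})`, and if
`Λ^{r-1}ζ = (Λ^{r-1}ζ)_prim + (1/n)(Λ^rζ)·ω` is the Lefschetz decomposition of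
the `(1,1)`-form `Λ^{r-1}ζ` with primitive part `q`, then
`ζ_prim^{(r-1)} = ((n-r-1)!/((n-2)!·(r-1)!)) · (Λ^{r-1}ζ)_prim`. -/
theorem stmt_11 {M : Type*} [AddCommGroup M] [Module ℂ M]
    (n r : ℕ) (hr : 1 ≤ r) (hrn : 2 * r ≤ n)
    (Deg : ℤ → Submodule ℂ M)
    (L Lam : Module.End ℂ M)
    (hL : ∀ (k : ℤ), ∀ v ∈ Deg k, L v ∈ Deg (k + 2))
    (hLam : ∀ (k : ℤ), ∀ v ∈ Deg k, Lam v ∈ Deg (k - 2))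
    (hcomm : ∀ (s : ℕ) (k : ℤ), ∀ v ∈ Deg k,
      (L ^ s) (Lam v) - Lam ((L ^ s) v)
        = ((s : ℂ) * ((k : ℂ) - (n : ℂ) + (s : ℂ) - 1)) • (L ^ (s - 1)) v)
    (ζ : M) (p : ℕ → M)
    (hprim : ∀ l, Lam (p l) = 0)
    (hdeg : ∀ l : ℕ, p l ∈ Deg (2 * ((r : ℤ) - (l : ℤ))))
    (hdec : ζ = ∑ l ∈ Finset.range (r + 1), (L ^ l) (p l))
    (q : M) (hq : Lam q = 0)
    (hdecq : (Lam ^ (r - 1)) ζ = q + ((n : ℂ))⁻¹ • L ((Lam ^ r) ζ)) :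
    p (r - 1) = ((Nat.factorial (n - r - 1) : ℂ) /
        ((Nat.factorial (n - 2) : ℂ) * (Nat.factorial (r - 1) : ℂ))) • q :=
  stmt_11_general n r hr hrn Deg L Lam hcomm ζ p hprim hdeg hdec q hdecq
end

section
/- Let (X, ω) be a compact Kähler manifold of dimension n, m ∈ {1,…,n}, and c ∈ H^{1,1}_BC(X,ℝ) a real Bott-Chern class. Suppose there exist a smooth d-closed real (1,1)-form α ∈ c and a smooth real (n-m,n-m)-form Ω₀ with Ω₀ > 0 (weakly) and ∂∂̄Ω₀ = 0 such that α ∧ ω^{m-1} ∧ Ω₀ > 0 at every point of X. Then −c is not [ω]-m-pseudo-effective, i.e. there is no real (m-1,m-1)-current S with (−α) ∧ ω^{m-1}/(m-1)! + i∂∂̄S ≥ 0 strongly. -/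
/-- Encoding: `F` stands for the real `(n-m,n-m)`-forms with weakly positive cone `PosW`,
`ddbarOp` for `∂∂̄`, `dens Ω` for the density of `α ∧ ω^{m-1} ∧ Ω` against `dV_ω`, and `IntF`
for integration over `X`, positive on the everywhere-positive functions `posFn`. Strong
positivity of `(−α) ∧ ω^{m-1}/(m-1)! + i∂∂̄S` is tested against `PosW`, where `S` only enters
through `Ω ↦ S(i∂∂̄Ω)`; so `S` is recorded as a functional on `G`. -/
theorem stmt_17_general {F G Fnc : Type*} [AddCommGroup F] [Module ℝ F]
    [AddCommGroup G] [Module ℝ G] [AddCommGroup Fnc] [Module ℝ Fnc]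
    (m : ℕ)
    (PosW : Set F) (ddbarOp : F →ₗ[ℝ] G)
    (posFn : Set Fnc) (IntF : Fnc →ₗ[ℝ] ℝ)
    (hIntPos : ∀ f ∈ posFn, 0 < IntF f)
    (dens : F →ₗ[ℝ] Fnc)
    (Ω₀ : F) (hΩ₀pos : Ω₀ ∈ PosW) (hΩ₀dd : ddbarOp Ω₀ = 0)
    (hptwise : dens Ω₀ ∈ posFn) :
    ¬ ∃ S : G →ₗ[ℝ] ℝ, ∀ Ω ∈ PosW,
      0 ≤ -((Nat.factorial (m - 1) : ℝ)⁻¹ * IntF (dens Ω)) + S (ddbarOp Ω) := by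
  rintro ⟨S, hS⟩
  have hpairing : 0 < (Nat.factorial (m - 1) : ℝ)⁻¹ * IntF (dens Ω₀) :=
    mul_pos (by positivity) (hIntPos _ hptwise)
  have hS₀ := hS Ω₀ hΩ₀pos
  rw [hΩ₀dd, map_zero, add_zero] at hS₀
  linarith

/-- The implication (a) ⟹ (b) of Theorem 1.3 / Theorem 2.10, stated abstractly:
on a compact Kähler manifold `(X, ω)` of dimension `n` with `m ∈ {1,…,n}`, let
`F` be the space of smooth real `(n-m,n-m)`-forms with weakly-positive cone
`PosW`, let `G` be the space of real `(n-m+1,n-m+1)`-forms and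
`ddbarOp : Ω ↦ ∂∂̄Ω`, let `Fnc` be the space of functions with the cone
`posFn` of everywhere-positive functions — integration `IntF` is positive on
`posFn` since `X` is compact — and let `dens : Ω ↦ (α ∧ ω^{m-1} ∧ Ω)/dV_ω` be
the density of the pairing against a smooth `d`-closed real `(1,1)`-form
`α ∈ c`.  Suppose there is `Ω₀ ∈ PosW` with `∂∂̄Ω₀ = 0` and
`α ∧ ω^{m-1} ∧ Ω₀ > 0` at every point of `X` (i.e. `dens Ω₀ ∈ posFn`).  Then
`−c` is not `[ω]`-`m`-pseudo-effective: there is no real `(m-1,m-1)`-current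
`S` (acting on `∂∂̄Ω` as a functional on `G`) with
`(−α) ∧ ω^{m-1}/(m-1)! + i∂∂̄S ≥ 0` strongly, i.e. with
`−(1/(m-1)!)·∫_X α ∧ ω^{m-1} ∧ Ω + S(∂∂̄Ω) ≥ 0` for all `Ω ∈ PosW`. -/
theorem stmt_17 {F G Fnc : Type*} [AddCommGroup F] [Module ℝ F]
    [AddCommGroup G] [Module ℝ G] [AddCommGroup Fnc] [Module ℝ Fnc]
    (n m : ℕ) (hm : 1 ≤ m) (hmn : m ≤ n)
    (PosW : Set F) (ddbarOp : F →ₗ[ℝ] G)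
    (posFn : Set Fnc) (IntF : Fnc →ₗ[ℝ] ℝ)
    (hIntPos : ∀ f ∈ posFn, 0 < IntF f)
    (dens : F →ₗ[ℝ] Fnc)
    (Ω₀ : F) (hΩ₀pos : Ω₀ ∈ PosW) (hΩ₀dd : ddbarOp Ω₀ = 0)
    (hptwise : dens Ω₀ ∈ posFn) :
    ¬ ∃ S : G →ₗ[ℝ] ℝ, ∀ Ω ∈ PosW,
      0 ≤ -((Nat.factorial (m - 1) : ℝ)⁻¹ * IntF (dens Ω)) + S (ddbarOp Ω) :=
  stmt_17_general m PosW ddbarOp posFn IntF hIntPos dens Ω₀ hΩ₀pos hΩ₀dd hptwise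
end
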